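/- The set V = {x ∈ ℝ^4 : x_1 + x_2 + x_3 + x_4 = 0 and x_i - x_j ≤ 1/3 for all i ≠ j} is equal to the convex hull of the 14 points consisting of all coordinate permutations of (1/4, -1/12, -1/12, -1/12), all coordinate permutations of (-1/4, 1/12, 1/12, 1/12), and all coordinate permutations of (1/6, 1/6, -1/6, -1/6); this polytope is a rhombic dodecahedron. -/

import Mathlib

/-!
Both sides are invariant under permutations of the coordinates, so it suffices to show that a
point `x ∈ V` with `x₀ ≤ x₁ ≤ x₂ ≤ x₃` lies in the hull. Such an `x` is the combination of
`(-1/4, 1/12, 1/12, 1/12)`, `(-1/6, -1/6, 1/6, 1/6)`, `(-1/12, -1/12, -1/12, 1/4)` and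
`(1/4, -1/12, -1/12, -1/12)` with weights `3(x₁ - x₀) + c`, `3(x₂ - x₁)`, `3(x₃ - x₂)` and `c`,
where `c = (1 - 3(x₃ - x₀))/2`; the weights sum to `1` and are nonnegative exactly because `x` is
sorted and `x₃ - x₀ ≤ 1/3`.
-/

/-- The cell `V = {x ∈ ℝ⁴ : ∑ x_i = 0, x_i - x_j ≤ 1/3 for all i ≠ j}`. -/
def Vcell : Set (EuclideanSpace ℝ (Fin 4)) :=
  {x | (∑ i, x i = 0) ∧ ∀ i j, i ≠ j → x i - x j ≤ 1/3}

/-- All coordinate permutations of a vector `a ∈ ℝ⁴`. -/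
def perms (a : EuclideanSpace ℝ (Fin 4)) : Set (EuclideanSpace ℝ (Fin 4)) :=
  {y | ∃ σ : Equiv.Perm (Fin 4), y = fun k => a (σ k)}

open Set

theorem LinearMap.mapsTo_convexHull {𝕜 E F : Type*} [Semiring 𝕜] [PartialOrder 𝕜]
    [AddCommMonoid E] [AddCommMonoid F] [Module 𝕜 E] [Module 𝕜 F] (f : E →ₗ[𝕜] F) {s : Set E}
    {t : Set F} (h : MapsTo f s t) : MapsTo f (convexHull 𝕜 s) (convexHull 𝕜 t) := fun _ hx =>
  convexHull_mono h.image_subset (f.image_convexHull s ▸ mem_image_of_mem f hx)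

section PermCoords

variable {ι : Type*}

def permCoords (σ : Equiv.Perm ι) : EuclideanSpace ℝ ι →ₗ[ℝ] EuclideanSpace ℝ ι where
  toFun x := WithLp.toLp 2 fun i => x (σ i)
  map_add' _ _ := rfl
  map_smul' _ _ := rfl

@[simp]
theorem permCoords_apply (σ : Equiv.Perm ι) (x : EuclideanSpace ℝ ι) (i : ι) :
    permCoords σ x i = x (σ i) := rfl

theorem permCoords_mul (σ τ : Equiv.Perm ι) (x : EuclideanSpace ℝ ι) :
    permCoords τ (permCoords σ x) = permCoords (σ * τ) x := rfl

theorem permCoords_one (x : EuclideanSpace ℝ ι) : permCoords 1 x = x := rfl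

end PermCoords

theorem mapsTo_permCoords_perms (a : EuclideanSpace ℝ (Fin 4)) (τ : Equiv.Perm (Fin 4)) :
    MapsTo (permCoords τ) (perms a) (perms a) := by
  rintro y ⟨σ, hy⟩
  exact ⟨τ.trans σ, congrArg (· ∘ τ) hy⟩

theorem mapsTo_permCoords_Vcell (τ : Equiv.Perm (Fin 4)) :
    MapsTo (permCoords τ) Vcell Vcell := by
  rintro x ⟨hsum, hle⟩
  refine ⟨?_, fun i j hij => hle _ _ (τ.injective.ne hij)⟩
  simpa only [permCoords_apply, Equiv.sum_comp τ (fun i => x i)] using hsum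

theorem convex_Vcell : Convex ℝ Vcell := by
  rintro x ⟨hx, hx'⟩ y ⟨hy, hy'⟩ a b ha hb hab
  refine ⟨?_, fun i j hij => ?_⟩
  · simp only [PiLp.add_apply, PiLp.smul_apply, smul_eq_mul, Finset.sum_add_distrib,
      ← Finset.mul_sum, hx, hy, mul_zero, add_zero]
  · have hi := hx' i j hij
    have hj := hy' i j hij
    simp only [PiLp.add_apply, PiLp.smul_apply, smul_eq_mul]
    nlinarith

theorem perms_subset_Vcell {a : EuclideanSpace ℝ (Fin 4)} (hsum : ∑ i, a i = 0)
    (hle : ∀ i j, a i - a j ≤ 1/3) : perms a ⊆ Vcell := by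
  rintro y ⟨σ, hy⟩
  obtain rfl : y = permCoords σ a := WithLp.ofLp_injective 2 hy
  exact mapsTo_permCoords_Vcell σ ⟨hsum, fun i j _ => hle i j⟩

def rhombicVertices : Set (EuclideanSpace ℝ (Fin 4)) :=
  perms (WithLp.toLp 2 ![1/4, -1/12, -1/12, -1/12]) ∪
    perms (WithLp.toLp 2 ![-1/4, 1/12, 1/12, 1/12]) ∪
    perms (WithLp.toLp 2 ![1/6, 1/6, -1/6, -1/6])

theorem rhombicVertices_subset_Vcell : rhombicVertices ⊆ Vcell := by
  refine union_subset (union_subset ?_ ?_) ?_ <;> refine perms_subset_Vcell ?_ ?_ <;>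
    norm_num [Fin.forall_fin_succ, Fin.sum_univ_four, Matrix.cons_val_two, Matrix.cons_val_three]

theorem mapsTo_permCoords_rhombicVertices (τ : Equiv.Perm (Fin 4)) :
    MapsTo (permCoords τ) rhombicVertices rhombicVertices :=
  ((mapsTo_permCoords_perms _ τ).union_union (mapsTo_permCoords_perms _ τ)).union_union
    (mapsTo_permCoords_perms _ τ)

noncomputable def monotoneChamberVertex : Fin 4 → EuclideanSpace ℝ (Fin 4) :=
  ![WithLp.toLp 2 ![-1/4, 1/12, 1/12, 1/12], WithLp.toLp 2 ![-1/6, -1/6, 1/6, 1/6],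
    WithLp.toLp 2 ![-1/12, -1/12, -1/12, 1/4], WithLp.toLp 2 ![1/4, -1/12, -1/12, -1/12]]

theorem monotoneChamberVertex_mem_rhombicVertices (i : Fin 4) :
    monotoneChamberVertex i ∈ rhombicVertices := by
  fin_cases i
  · exact Or.inl (Or.inr ⟨1, rfl⟩)
  · refine Or.inr ⟨Equiv.swap 0 2 * Equiv.swap 1 3, ?_⟩
    funext k
    fin_cases k <;> simp [monotoneChamberVertex, Equiv.swap_apply_of_ne_of_ne]
  · refine Or.inl (Or.inl ⟨Equiv.swap 0 3, ?_⟩)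
    funext k
    fin_cases k <;> simp [monotoneChamberVertex, Equiv.swap_apply_of_ne_of_ne]
  · exact Or.inl (Or.inl ⟨1, rfl⟩)

theorem mem_convexHull_rhombicVertices_of_monotone {x : EuclideanSpace ℝ (Fin 4)} (hx : x ∈ Vcell)
    (hmono : Monotone x) : x ∈ convexHull ℝ rhombicVertices := by
  obtain ⟨hsum, hle⟩ := hx
  have h01 : x 0 ≤ x 1 := hmono (by decide)
  have h12 : x 1 ≤ x 2 := hmono (by decide)
  have h23 : x 2 ≤ x 3 := hmono (by decide)
  have h30 : x 3 - x 0 ≤ 1/3 := hle 3 0 (by decide)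
  rw [Fin.sum_univ_four] at hsum
  set c := (1 - 3 * (x 3 - x 0)) / 2
  let w : Fin 4 → ℝ := ![3 * (x 1 - x 0) + c, 3 * (x 2 - x 1), 3 * (x 3 - x 2), c]
  have hx : x = ∑ i, w i • monotoneChamberVertex i := by
    ext k
    fin_cases k <;>
      simp only [Fin.zero_eta, Fin.mk_one, Fin.reduceFinMk, Fin.isValue, Fin.sum_univ_four,
        Matrix.cons_val_zero, Matrix.cons_val_one, Matrix.cons_val, PiLp.add_apply, PiLp.smul_apply,
        smul_eq_mul, w, c, monotoneChamberVertex] <;>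
      linarith
  rw [hx]
  refine (convex_convexHull ℝ _).sum_mem (fun i _ => ?_) ?_
    (fun i _ => subset_convexHull ℝ _ (monotoneChamberVertex_mem_rhombicVertices i))
  · fin_cases i <;>
      simp only [Fin.zero_eta, Fin.mk_one, Fin.reduceFinMk, Fin.isValue, Matrix.cons_val_zero,
        Matrix.cons_val_one, Matrix.cons_val, w, c] <;>
      linarith
  · simp only [w, c, Fin.sum_univ_four, Matrix.cons_val_zero, Matrix.cons_val_one, Matrix.cons_val]
    ring

theorem Vcell_eq_convexHull :
    Vcell = convexHull ℝ
      (perms (WithLp.toLp 2 ![1/4, -1/12, -1/12, -1/12]) ∪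
       perms (WithLp.toLp 2 ![-1/4, 1/12, 1/12, 1/12]) ∪
       perms (WithLp.toLp 2 ![1/6, 1/6, -1/6, -1/6])) := by
  change Vcell = convexHull ℝ rhombicVertices
  refine Subset.antisymm (fun x hx => ?_)
    (convexHull_min rhombicVertices_subset_Vcell convex_Vcell)
  set σ := Tuple.sort x
  have hsorted : permCoords σ x ∈ convexHull ℝ rhombicVertices :=
    mem_convexHull_rhombicVertices_of_monotone (mapsTo_permCoords_Vcell σ hx)
      (Tuple.monotone_sort x)
  simpa only [permCoords_mul, mul_inv_cancel, permCoords_one] using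
    LinearMap.mapsTo_convexHull _ (mapsTo_permCoords_rhombicVertices σ⁻¹) hsorted
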